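/- arXiv:2212.13701 — 5 statements merged into one kernel-verified Lean document; each statement's English description precedes it below -/
import Mathlib

section
/- Let θ₁, θ₂, θ₃, θ₄, θ₅ be nonnegative real numbers such that θ_j + θ_k < 2π for all j ≠ k. Then (1/8)(Σ_{j=1}^{5} θ_j⁴ + 4 Σ_{1≤j<k≤5} θ_j² θ_k² − 24π² Σ_{j=1}^{5} θ_j² + 80π⁴) > 0. -/
/-!
With `s = ∑ θ_j²` and `q = ∑ θ_j⁴`, the pair sum is `(s² - q) / 2`, so eight times the
polynomial equals `2 s² - q - 24 π² s + 80 π⁴`. If `a` is the largest angle then `q ≤ a² s`,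
which leaves the quadratic `2 s² - (a² + 24 π²) s + 80 π⁴`. It is decreasing on the admissible
range of `s`, which is bounded by `5 a²` and, since the other angles are below `2π - a`, by
`a² + 4 (2π - a)²`. At the first bound it equals `5 (3a² - 4π²)²`, positive for `a ≤ π`; at the
second it equals `u (45 u³ - 56 π u² - 48 π² u + 64 π³)` with `u = 2π - a`, positive for
`π < a < 2π`. The bound is sharp: the polynomial vanishes at the excluded point
`θ = (2π, 0, 0, 0, 0)`.
-/

open Real Finset

theorem Finset.sq_sum_eq_sum_sq_add_two_mul_sum_lt {ι R : Type*} [Fintype ι] [LinearOrder ι]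
    [CommSemiring R] (x : ι → R) :
    (∑ j, x j) ^ 2 = ∑ j, x j ^ 2 + 2 * ∑ j, ∑ k ∈ univ.filter (fun k => j < k), x j * x k := by
  have hswap : ∑ j, ∑ k ∈ univ.filter (fun k => k < j), x j * x k =
      ∑ j, ∑ k ∈ univ.filter (fun k => j < k), x j * x k := by
    simp only [sum_filter]
    rw [sum_comm]
    simp only [mul_comm]
  have hsplit : ∀ j k, x j * x k = (if j < k then x j * x k else 0) +
      (if j = k then x j * x k else 0) + (if k < j then x j * x k else 0) := by
    intro j k
    rcases lt_trichotomy j k with h | rfl | h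
    · simp [h, h.ne, h.not_gt]
    · simp
    · simp [h, h.ne', h.not_gt]
  rw [sq, sum_mul_sum, two_mul]
  simp only [sum_filter] at hswap ⊢
  rw [sum_congr rfl fun j _ => sum_congr rfl fun k _ => hsplit j k]
  simp only [sum_add_distrib, sum_ite_eq, mem_univ, if_true, ← sq, hswap]
  ring

theorem Finset.sum_sq_le_card_mul_sq {ι : Type*} {s : Finset ι} {x : ι → ℝ} {b : ℝ}
    (hx : ∀ j ∈ s, 0 ≤ x j) (hb : ∀ j ∈ s, x j ≤ b) :
    ∑ j ∈ s, x j ^ 2 ≤ #s * b ^ 2 := by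
  simpa using sum_le_card_nsmul s _ _ fun j hj => pow_le_pow_left₀ (hx j hj) (hb j hj) 2

theorem Finset.sum_sq_le_mul_sum {ι : Type*} {s : Finset ι} {y : ι → ℝ} {M : ℝ}
    (hy : ∀ j ∈ s, 0 ≤ y j) (hM : ∀ j ∈ s, y j ≤ M) :
    ∑ j ∈ s, y j ^ 2 ≤ M * ∑ j ∈ s, y j := by
  rw [mul_sum]
  exact sum_le_sum fun j hj => by
    rw [sq]
    exact mul_le_mul_of_nonneg_right (hM j hj) (hy j hj)

theorem two_mul_sq_sub_mul_le_of_le {c s b : ℝ} (hsb : s ≤ b) (hb : 4 * b ≤ c) :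
    2 * b ^ 2 - c * b ≤ 2 * s ^ 2 - c * s := by
  nlinarith [mul_nonneg (sub_nonneg.2 hsb) (by linarith : 0 ≤ c - 2 * s - 2 * b)]

theorem volume_quadratic_pos {a s : ℝ} (ha : 0 ≤ a) (ha2 : a < 2 * π) (hs5 : s ≤ 5 * a ^ 2)
    (hs : s ≤ a ^ 2 + 4 * (2 * π - a) ^ 2) :
    0 < 2 * s ^ 2 - (a ^ 2 + 24 * π ^ 2) * s + 80 * π ^ 4 := by
  have hπ := pi_pos
  rcases le_or_gt a π with h | h
  · have ha_sq : a ^ 2 ≤ π ^ 2 := pow_le_pow_left₀ ha h 2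
    have hmono := two_mul_sq_sub_mul_le_of_le (c := a ^ 2 + 24 * π ^ 2) hs5 (by nlinarith)
    calc 0 < 5 * (4 * π ^ 2 - 3 * a ^ 2) ^ 2 := by
          have : 0 < 4 * π ^ 2 - 3 * a ^ 2 := by nlinarith
          positivity
      _ = 2 * (5 * a ^ 2) ^ 2 - (a ^ 2 + 24 * π ^ 2) * (5 * a ^ 2) + 80 * π ^ 4 := by ring
      _ ≤ _ := by linarith
  · obtain ⟨u, rfl⟩ : ∃ u, a = 2 * π - u := ⟨2 * π - a, by ring⟩
    have hu : 0 < u := by linarith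
    rw [sub_sub_cancel] at hs
    have hmono := two_mul_sq_sub_mul_le_of_le (c := (2 * π - u) ^ 2 + 24 * π ^ 2) hs
      (by nlinarith)
    -- the cubic equals `5 π³` at `u = π` and decreases on `[0, π]`
    have hcubic : 0 < 45 * u ^ 3 - 56 * π * u ^ 2 - 48 * π ^ 2 * u + 64 * π ^ 3 := by
      nlinarith [mul_nonneg (by linarith : 0 ≤ π - u)
        (by nlinarith : 0 ≤ 59 * π ^ 2 + 11 * π * u - 45 * u ^ 2), pow_pos hπ 3]
    calc 0 < u * (45 * u ^ 3 - 56 * π * u ^ 2 - 48 * π ^ 2 * u + 64 * π ^ 3) := by positivity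
      _ = 2 * ((2 * π - u) ^ 2 + 4 * u ^ 2) ^ 2
          - ((2 * π - u) ^ 2 + 24 * π ^ 2) * ((2 * π - u) ^ 2 + 4 * u ^ 2) + 80 * π ^ 4 := by
        ring
      _ ≤ _ := by linarith

/-- If nonnegative cone angles `θ₁,…,θ₅` satisfy `θ_j + θ_k < 2π` for all `j ≠ k`, then
the evaluation of Mirzakhani's genus-zero five-point volume polynomial at `L_j = iθ_j`,
namely `(1/8)(Σ θ_j⁴ + 4 Σ_{j<k} θ_j²θ_k² − 24π² Σ θ_j² + 80π⁴)`, is positive. -/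
theorem stmt_4 (θ : Fin 5 → ℝ) (hθ : ∀ j, 0 ≤ θ j)
    (hsum : ∀ j k, j ≠ k → θ j + θ k < 2 * π) :
    0 < (1 / 8 : ℝ) * ((∑ j, θ j ^ 4) +
        4 * ∑ j, ∑ k ∈ Finset.univ.filter (fun k => j < k), θ j ^ 2 * θ k ^ 2 -
        24 * π ^ 2 * ∑ j, θ j ^ 2 + 80 * π ^ 4) := by
  obtain ⟨m, hm⟩ := Finite.exists_max θ
  obtain ⟨k, hk⟩ := exists_ne m
  have ha2 : θ m < 2 * π := by linarith [hsum m k hk.symm, hθ k]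
  have hs5 : ∑ j, θ j ^ 2 ≤ 5 * θ m ^ 2 := by
    simpa using sum_sq_le_card_mul_sq (s := univ) (fun j _ => hθ j) (fun j _ => hm j)
  have hs : ∑ j, θ j ^ 2 ≤ θ m ^ 2 + 4 * (2 * π - θ m) ^ 2 := by
    have hrest := sum_sq_le_card_mul_sq (s := univ.erase m) (b := 2 * π - θ m) (fun j _ => hθ j)
      (fun j hj => by linarith [hsum m j (ne_of_mem_erase hj).symm])
    have hcard : (#(univ.erase m) : ℝ) = 4 := by simp [card_erase_of_mem]
    rw [hcard] at hrest
    linarith [add_sum_erase univ (fun j => θ j ^ 2) (mem_univ m)]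
  have hq : ∑ j, (θ j ^ 2) ^ 2 ≤ θ m ^ 2 * ∑ j, θ j ^ 2 :=
    sum_sq_le_mul_sum (fun j _ => sq_nonneg _) (fun j _ => pow_le_pow_left₀ (hθ j) (hm j) 2)
  have hpair := sq_sum_eq_sum_sq_add_two_mul_sum_lt (fun j => θ j ^ 2)
  have hpos := volume_quadratic_pos (hθ m) ha2 hs5 hs
  simp only [← pow_mul] at hq hpair
  linarith
end

section
/- Let κ < 2 be a real number and let x, y, z be real numbers with x ≥ 2, y ≥ 2, z ≥ 2 and x² + y² + z² − xyz − 2 = κ. Then yz − x > 2. -/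
/-! The identity `(x - 2) (yz - x - 2) = (y - z)² + 4 - (x² + y² + z² - xyz)` shows that the
product is positive when `x² + y² + z² - xyz < 4`; as `x - 2 ≥ 0`, the second factor is positive. -/

theorem sub_two_mul_mul_sub_sub_two {R : Type*} [CommRing R] (x y z : R) :
    (x - 2) * (y * z - x - 2) = (y - z) ^ 2 + 4 - (x ^ 2 + y ^ 2 + z ^ 2 - x * y * z) := by
  ring

theorem two_lt_mul_sub_of_sq_add_sq_add_sq_sub_mul_lt {x y z : ℝ} (hx : 2 ≤ x)
    (h : x ^ 2 + y ^ 2 + z ^ 2 - x * y * z < 4) : 2 < y * z - x := by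
  have hprod : 0 < (x - 2) * (y * z - x - 2) := by
    rw [sub_two_mul_mul_sub_sub_two]
    linarith [sq_nonneg (y - z)]
  linarith [pos_of_mul_pos_right hprod (sub_nonneg.mpr hx)]

theorem stmt_14_general (κ x y z : ℝ) (hκ : κ < 2) (hx : 2 ≤ x)
    (h : x ^ 2 + y ^ 2 + z ^ 2 - x * y * z - 2 = κ) :
    2 < y * z - x :=
  two_lt_mul_sub_of_sq_add_sq_add_sq_sub_mul_lt hx (by linarith)

/-- On the Teichmüller component `{x,y,z ≥ 2, x² + y² + z² − xyz − 2 = κ}` with `κ < 2`,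
the involution `(x,y,z) ↦ (yz−x, y, z)` satisfies `yz − x > 2`, hence maps the component
into itself. -/
theorem stmt_14 (κ x y z : ℝ) (hκ : κ < 2) (hx : 2 ≤ x) (hy : 2 ≤ y) (hz : 2 ≤ z)
    (h : x ^ 2 + y ^ 2 + z ^ 2 - x * y * z - 2 = κ) :
    2 < y * z - x :=
  stmt_14_general κ x y z hκ hx h
end

section
/- Let κ < 2 be a real number and let x, y, z be real numbers with x ≥ 2, y ≥ 2, z ≥ 2 and x² + y² + z² − xyz − 2 = κ. Then it is impossible that both 2x ≥ yz and 2y ≥ zx hold; equivalently, at most one of the homogeneous coordinates r = x/(yz), s = y/(zx), t = z/(xy) can be ≥ 1/2. -/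
/-! Multiplying `yz ≤ 2x` and `zx ≤ 2y` gives `z² ≤ 4`, so `z = 2` on the component `z ≥ 2`.
At `z = 2` the defining equation reads `κ = (x - y)² + 2 ≥ 2`, contradicting `κ < 2`. -/

lemma le_two_of_mul_le_two_mul {x y z : ℝ} (hx : 0 < x) (hy : 0 < y) (hz : 0 ≤ z)
    (h₁ : y * z ≤ 2 * x) (h₂ : z * x ≤ 2 * y) : z ≤ 2 := by
  have hxy : 0 < x * y := mul_pos hx hy
  have hsq : z ^ 2 * (x * y) ≤ 2 ^ 2 * (x * y) :=
    calc z ^ 2 * (x * y) = (y * z) * (z * x) := by ring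
      _ ≤ (2 * x) * (2 * y) := mul_le_mul h₁ h₂ (by positivity) (by positivity)
      _ = 2 ^ 2 * (x * y) := by ring
  exact (pow_le_pow_iff_left₀ hz zero_le_two two_ne_zero).1 (le_of_mul_le_mul_right hsq hxy)

/-- On the Teichmüller component `{x,y,z ≥ 2, x² + y² + z² − xyz − 2 = κ}` with `κ < 2`,
it is impossible that both `2x ≥ yz` and `2y ≥ zx` hold; equivalently, at most one of the
homogeneous coordinates `r = x/(yz)`, `s = y/(zx)`, `t = z/(xy)` can be `≥ 1/2`. -/
theorem stmt_15 (κ x y z : ℝ) (hκ : κ < 2) (hx : 2 ≤ x) (hy : 2 ≤ y) (hz : 2 ≤ z)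
    (h : x ^ 2 + y ^ 2 + z ^ 2 - x * y * z - 2 = κ) :
    ¬(y * z ≤ 2 * x ∧ z * x ≤ 2 * y) := by
  rintro ⟨h₁, h₂⟩
  have hz₂ : z = 2 :=
    le_antisymm (le_two_of_mul_le_two_mul (by linarith) (by linarith) (by linarith) h₁ h₂) hz
  subst hz₂
  have hκ_eq : κ = (x - y) ^ 2 + 2 := by rw [← h]; ring
  linarith [sq_nonneg (x - y)]
end

section
/- Let κ ∈ (−2,2). Let φ₁, φ₂, φ₃ be the bijections of ℝ³ given by φ₁(x,y,z) = (yz−x, y, z), φ₂(x,y,z) = (x, y, xy−z), φ₃(x,y,z) = (x, xz−y, z) (each is an involution), and let G be the group of bijections of ℝ³ generated by φ₁, φ₂, φ₃. Then for every (x,y,z) ∈ ℝ³ with x ≥ 2, y ≥ 2, z ≥ 2 and x² + y² + z² − xyz − 2 = κ, there exists exactly one point (x′,y′,z′) in the G-orbit of (x,y,z) satisfying 2x′ ≤ y′z′, 2y′ ≤ z′x′, and 2z′ ≤ x′y′. -/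
/-- The involution `φ₁(x,y,z) = (yz−x, y, z)` of `ℝ³`. -/
noncomputable def phi1 : Equiv.Perm (ℝ × ℝ × ℝ) :=
  Function.Involutive.toPerm (fun p => (p.2.1 * p.2.2 - p.1, p.2.1, p.2.2))
    (fun p => by obtain ⟨x, y, z⟩ := p; simp)

/-- The involution `φ₂(x,y,z) = (x, y, xy−z)` of `ℝ³`. -/
noncomputable def phi2 : Equiv.Perm (ℝ × ℝ × ℝ) :=
  Function.Involutive.toPerm (fun p => (p.1, p.2.1, p.1 * p.2.1 - p.2.2))
    (fun p => by obtain ⟨x, y, z⟩ := p; simp)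

/-- The involution `φ₃(x,y,z) = (x, xz−y, z)` of `ℝ³`. -/
noncomputable def phi3 : Equiv.Perm (ℝ × ℝ × ℝ) :=
  Function.Involutive.toPerm (fun p => (p.1, p.1 * p.2.2 - p.2.1, p.2.2))
    (fun p => by obtain ⟨x, y, z⟩ := p; simp)

/-!
Each `φᵢ` replaces one coordinate by the other root of the quadratic that the level-set equation
becomes in that coordinate. Call such a replacement a descent step when the corresponding
inequality fails, i.e. when it lowers the coordinate sum. With all coordinates `≥ 2` at most one
of the three inequalities fails at a time, so descent is deterministic. A descent step followed
by another one lowers the coordinate sum by at least `2(2 - κ)/S`, where `S` is the initial sum, so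
descent ends in the domain. Any `φᵢ` applied to a point either is its descent step, fixes it, or
is undone by a descent step. Hence the set of points that descend to a given reduced point is
invariant under the group, and a reduced point descends only to itself.
-/

open Relation

section Rewriting

variable {α : Type*} {r : α → α → Prop}

theorem Relation.ReflTransGen.of_head_of_unique {a b c : α} (hab : ReflTransGen r a b)
    (hb : ∀ d, ¬ r b d) (hac : r a c) (huniq : ∀ d, r a d → d = c) : ReflTransGen r c b := by
  rcases hab.cases_head with rfl | ⟨d, had, hdb⟩
  · exact absurd hac (hb c)
  · exact huniq d had ▸ hdb

theorem Relation.ReflTransGen.eq_of_forall_not {a b : α} (hab : ReflTransGen r a b)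
    (ha : ∀ d, ¬ r a d) : a = b :=
  hab.cases_head.resolve_right fun ⟨d, had, _⟩ => ha d had

theorem Relation.exists_reflTransGen_normal_of_decrease {s : Set α} (f : α → ℝ) {m ε : ℝ}
    (hε : 0 < ε) (hs : ∀ a ∈ s, ∀ b, r a b → b ∈ s) (hm : ∀ a ∈ s, m ≤ f a)
    (hdec : ∀ a ∈ s, ∀ b c, r a b → r b c → f b + ε ≤ f a) (a : α) (ha : a ∈ s) :
    ∃ b, ReflTransGen r a b ∧ ∀ c, ¬ r b c := by
  obtain ⟨n, hn⟩ := exists_nat_gt ((f a - m) / ε)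
  rw [div_lt_iff₀ hε] at hn
  induction n generalizing a with
  | zero =>
    simp only [Nat.cast_zero, zero_mul] at hn
    linarith [hm a ha]
  | succ n ih =>
    by_cases ha_normal : ∀ b, ¬ r a b
    · exact ⟨a, .refl, ha_normal⟩
    obtain ⟨b, hab⟩ := not_forall_not.1 ha_normal
    by_cases hb_normal : ∀ c, ¬ r b c
    · exact ⟨b, .single hab, hb_normal⟩
    obtain ⟨c, hbc⟩ := not_forall_not.1 hb_normal
    have hdrop := hdec a ha b c hab hbc
    obtain ⟨d, hbd, hd⟩ := ih b (hs a ha b hab) (by push_cast at hn; linarith)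
    exact ⟨d, .head hab hbd, hd⟩

end Rewriting

namespace OneHoledTorus

def teichmuller (κ : ℝ) : Set (ℝ × ℝ × ℝ) :=
  {p | 2 ≤ p.1 ∧ 2 ≤ p.2.1 ∧ 2 ≤ p.2.2 ∧
    p.1 ^ 2 + p.2.1 ^ 2 + p.2.2 ^ 2 - p.1 * p.2.1 * p.2.2 - 2 = κ}

def IsReduced (p : ℝ × ℝ × ℝ) : Prop :=
  2 * p.1 ≤ p.2.1 * p.2.2 ∧ 2 * p.2.1 ≤ p.2.2 * p.1 ∧ 2 * p.2.2 ≤ p.1 * p.2.1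

def coordSum (p : ℝ × ℝ × ℝ) : ℝ := p.1 + p.2.1 + p.2.2

abbrev generators : Set (Equiv.Perm (ℝ × ℝ × ℝ)) := {phi1, phi2, phi3}

theorem mem_teichmuller {κ x y z : ℝ} :
    (x, y, z) ∈ teichmuller κ ↔
      2 ≤ x ∧ 2 ≤ y ∧ 2 ≤ z ∧ x ^ 2 + y ^ 2 + z ^ 2 - x * y * z - 2 = κ :=
  Iff.rfl

theorem phi1_apply (x y z : ℝ) : phi1 (x, y, z) = (y * z - x, y, z) := rfl
theorem phi2_apply (x y z : ℝ) : phi2 (x, y, z) = (x, y, x * y - z) := rfl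
theorem phi3_apply (x y z : ℝ) : phi3 (x, y, z) = (x, x * z - y, z) := rfl

theorem inv_eq_self_of_mem_generators {g : Equiv.Perm (ℝ × ℝ × ℝ)} (hg : g ∈ generators) :
    g⁻¹ = g := by
  rcases hg with rfl | rfl | rfl <;> rfl

section Vieta

variable {κ a b c : ℝ}

theorem two_lt_mul_sub_of_level (hκ : κ < 2) (ha : 2 ≤ a)
    (h : a ^ 2 + b ^ 2 + c ^ 2 - a * b * c - 2 = κ) : 2 < b * c - a := by
  have hid : (a - 2) * (b * c - a - 2) = (b - c) ^ 2 + (2 - κ) := by linear_combination -h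
  nlinarith [sq_nonneg (b - c)]

theorem two_mul_lt_mul_of_mul_lt_two_mul (hb : 2 ≤ b) (hc : 2 ≤ c) (h : b * c < 2 * a) :
    2 * b < c * a := by
  nlinarith [mul_pos (by linarith : (0 : ℝ) < c) (by linarith : (0 : ℝ) < 2 * a - b * c),
    mul_nonneg (by linarith : (0 : ℝ) ≤ b) (by nlinarith : (0 : ℝ) ≤ c ^ 2 - 4)]

theorem two_mul_lt_mul_and_of_mul_lt_two_mul (hb : 2 ≤ b) (hc : 2 ≤ c) (h : b * c < 2 * a) :
    2 * b < c * a ∧ 2 * c < a * b :=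
  ⟨two_mul_lt_mul_of_mul_lt_two_mul hb hc h,
    by linarith [two_mul_lt_mul_of_mul_lt_two_mul hc hb (by linarith : c * b < 2 * a)]⟩

/-- Replacing `a` by `bc - a` lowers the coordinate sum by `2a - bc`; `hflip` says that the
next descent step flips `b`. -/
theorem div_le_two_mul_sub_of_level (hκ : κ < 2) (ha : 2 ≤ a) (hb : 2 ≤ b) (hc : 2 ≤ c)
    (h : a ^ 2 + b ^ 2 + c ^ 2 - a * b * c - 2 = κ) {S : ℝ} (hS : b ≤ S)
    (hflip : c * (b * c - a) < 2 * b) : 2 * (2 - κ) / S ≤ 2 * a - b * c := by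
  have hprod : a * (c * (b * c - a)) = c * (b ^ 2 + c ^ 2 - 2 - κ) := by
    linear_combination (-c) * h
  have hcube : 2 * (2 - κ) ≤ c * (c ^ 2 - 2 - κ) := by
    linarith [mul_nonneg (by linarith : (0 : ℝ) ≤ c - 2)
      (by nlinarith : (0 : ℝ) ≤ c ^ 2 + 2 * c + 2 - κ)]
  have hdrop : 2 * (2 - κ) ≤ b * (2 * a - b * c) := by
    nlinarith [mul_lt_mul_of_pos_left hflip (by linarith : (0 : ℝ) < a)]
  have hpos : 0 ≤ 2 * a - b * c := by nlinarith
  calc 2 * (2 - κ) / S ≤ b * (2 * a - b * c) / S := by gcongr; linarith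
    _ ≤ 2 * a - b * c := by rw [div_le_iff₀ (by linarith)]; nlinarith

end Vieta

theorem phi_apply_mem_teichmuller {κ : ℝ} (hκ : κ < 2) {g : Equiv.Perm (ℝ × ℝ × ℝ)}
    (hg : g ∈ generators) {p : ℝ × ℝ × ℝ} (hp : p ∈ teichmuller κ) :
    g p ∈ teichmuller κ := by
  obtain ⟨x, y, z⟩ := p
  obtain ⟨hx, hy, hz, h⟩ := hp
  rcases hg with rfl | rfl | rfl
  · rw [phi1_apply]
    exact ⟨(two_lt_mul_sub_of_level hκ hx h).le, hy, hz, by linear_combination h⟩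
  · rw [phi2_apply]
    exact ⟨hx, hy, (two_lt_mul_sub_of_level hκ hz (by linear_combination h)).le,
      by linear_combination h⟩
  · rw [phi3_apply]
    exact ⟨hx, (two_lt_mul_sub_of_level hκ hy (by linear_combination h)).le, hz,
      by linear_combination h⟩

inductive DescentStep : ℝ × ℝ × ℝ → ℝ × ℝ × ℝ → Prop
  | flip1 {x y z : ℝ} : y * z < 2 * x → DescentStep (x, y, z) (y * z - x, y, z)
  | flip2 {x y z : ℝ} : x * y < 2 * z → DescentStep (x, y, z) (x, y, x * y - z)
  | flip3 {x y z : ℝ} : z * x < 2 * y → DescentStep (x, y, z) (x, x * z - y, z)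

namespace DescentStep

theorem exists_mem_generators {p q : ℝ × ℝ × ℝ} (h : DescentStep p q) :
    ∃ g ∈ generators, g p = q := by
  rcases h with _ | _ | _
  exacts [⟨phi1, by simp, rfl⟩, ⟨phi2, by simp, rfl⟩, ⟨phi3, by simp, rfl⟩]

theorem mem_teichmuller {κ : ℝ} (hκ : κ < 2) {p q : ℝ × ℝ × ℝ} (h : DescentStep p q)
    (hp : p ∈ teichmuller κ) : q ∈ teichmuller κ := by
  obtain ⟨g, hg, rfl⟩ := h.exists_mem_generators
  exact phi_apply_mem_teichmuller hκ hg hp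

theorem coordSum_lt {p q : ℝ × ℝ × ℝ} (h : DescentStep p q) : coordSum q < coordSum p := by
  rcases h with ⟨h⟩ | ⟨h⟩ | ⟨h⟩ <;> simp only [coordSum] <;> linarith

theorem eq_of_descentStep {x y z : ℝ} (hx : 2 ≤ x) (hy : 2 ≤ y) (hz : 2 ≤ z)
    {q q' : ℝ × ℝ × ℝ} (h : DescentStep (x, y, z) q) (h' : DescentStep (x, y, z) q') :
    q' = q := by
  rcases h with ⟨h⟩ | ⟨h⟩ | ⟨h⟩
  · have hothers := two_mul_lt_mul_and_of_mul_lt_two_mul hy hz h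
    rcases h' with ⟨h'⟩ | ⟨h'⟩ | ⟨h'⟩ <;> first | rfl | linarith
  · have hothers := two_mul_lt_mul_and_of_mul_lt_two_mul hx hy h
    rcases h' with ⟨h'⟩ | ⟨h'⟩ | ⟨h'⟩ <;> first | rfl | linarith
  · have hothers := two_mul_lt_mul_and_of_mul_lt_two_mul hz hx h
    rcases h' with ⟨h'⟩ | ⟨h'⟩ | ⟨h'⟩ <;> first | rfl | linarith

theorem coordSum_add_le {κ : ℝ} (hκ : κ < 2) {p q r : ℝ × ℝ × ℝ}
    (hp : p ∈ teichmuller κ) {S : ℝ} (hS : coordSum p ≤ S) (hpq : DescentStep p q)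
    (hqr : DescentStep q r) :
    coordSum q + 2 * (2 - κ) / S ≤ coordSum p := by
  rcases hpq with @⟨x, y, z, h⟩ | @⟨x, y, z, h⟩ | @⟨x, y, z, h⟩ <;>
    obtain ⟨hx, hy, hz, hl⟩ := OneHoledTorus.mem_teichmuller.1 hp <;>
    simp only [coordSum] at hS ⊢ <;> rcases hqr with ⟨h'⟩ | ⟨h'⟩ | ⟨h'⟩
  · linarith
  · linarith [div_le_two_mul_sub_of_level hκ hx hz hy (by linear_combination hl)
      (by linarith) (by linarith : y * (z * y - x) < 2 * z)]
  · linarith [div_le_two_mul_sub_of_level hκ hx hy hz hl (by linarith) h']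
  · linarith [div_le_two_mul_sub_of_level hκ hz hx hy (by linear_combination hl)
      (by linarith) h']
  · linarith
  · linarith [div_le_two_mul_sub_of_level hκ hz hy hx (by linear_combination hl)
      (by linarith) (by linarith : x * (y * x - z) < 2 * y)]
  · linarith [div_le_two_mul_sub_of_level hκ hy hx hz (by linear_combination hl)
      (by linarith) (by linarith : z * (x * z - y) < 2 * x)]
  · linarith [div_le_two_mul_sub_of_level hκ hy hz hx (by linear_combination hl)
      (by linarith) (by linarith : x * (z * x - y) < 2 * z)]
  · linarith

end DescentStep

theorem isReduced_iff_forall_not_descentStep {p : ℝ × ℝ × ℝ} :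
    IsReduced p ↔ ∀ q, ¬ DescentStep p q := by
  obtain ⟨x, y, z⟩ := p
  constructor
  · rintro ⟨h1, h2, h3⟩ q (⟨h⟩ | ⟨h⟩ | ⟨h⟩) <;> linarith
  · intro h
    exact ⟨not_lt.1 fun h1 => h _ (.flip1 h1), not_lt.1 fun h3 => h _ (.flip3 h3),
      not_lt.1 fun h2 => h _ (.flip2 h2)⟩

theorem descentStep_or_reflTransGen_apply {g : Equiv.Perm (ℝ × ℝ × ℝ)}
    (hg : g ∈ generators) (p : ℝ × ℝ × ℝ) :
    DescentStep p (g p) ∨ ReflTransGen DescentStep (g p) p := by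
  obtain ⟨x, y, z⟩ := p
  rcases hg with rfl | rfl | rfl
  · rw [phi1_apply]
    rcases lt_trichotomy (y * z) (2 * x) with h | h | h
    · exact .inl (.flip1 h)
    · exact .inr (by rw [show y * z - x = x by linarith])
    · have hback := DescentStep.flip1 (x := y * z - x) (y := y) (z := z) (by linarith)
      exact .inr (.single (by rwa [sub_sub_cancel] at hback))
  · rw [phi2_apply]
    rcases lt_trichotomy (x * y) (2 * z) with h | h | h
    · exact .inl (.flip2 h)
    · exact .inr (by rw [show x * y - z = z by linarith])
    · have hback := DescentStep.flip2 (x := x) (y := y) (z := x * y - z) (by linarith)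
      exact .inr (.single (by rwa [sub_sub_cancel] at hback))
  · rw [phi3_apply]
    rcases lt_trichotomy (z * x) (2 * y) with h | h | h
    · exact .inl (.flip3 h)
    · exact .inr (by rw [show x * z - y = y by linarith])
    · have hback := DescentStep.flip3 (x := x) (y := x * z - y) (z := z) (by linarith)
      exact .inr (.single (by rwa [sub_sub_cancel] at hback))

theorem reflTransGen_apply_of_mem_generators {κ : ℝ} {g : Equiv.Perm (ℝ × ℝ × ℝ)}
    (hg : g ∈ generators) {p q : ℝ × ℝ × ℝ} (hp : p ∈ teichmuller κ) (hq : IsReduced q)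
    (hpq : ReflTransGen DescentStep p q) : ReflTransGen DescentStep (g p) q := by
  rcases descentStep_or_reflTransGen_apply hg p with h | h
  · obtain ⟨x, y, z⟩ := p
    obtain ⟨hx, hy, hz, -⟩ := mem_teichmuller.1 hp
    exact hpq.of_head_of_unique (isReduced_iff_forall_not_descentStep.1 hq) h
      fun d hd => DescentStep.eq_of_descentStep hx hy hz h hd
  · exact h.trans hpq

theorem reflTransGen_apply_of_mem_closure {κ : ℝ} (hκ : κ < 2) {q : ℝ × ℝ × ℝ}
    (hq : IsReduced q) {g : Equiv.Perm (ℝ × ℝ × ℝ)}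
    (hg : g ∈ Subgroup.closure generators) :
    ∀ p ∈ teichmuller κ, ReflTransGen DescentStep p q →
      g p ∈ teichmuller κ ∧ ReflTransGen DescentStep (g p) q := by
  induction hg using Subgroup.closure_induction'' with
  | mem g hg => exact fun p hp hpq => ⟨phi_apply_mem_teichmuller hκ hg hp,
      reflTransGen_apply_of_mem_generators hg hp hq hpq⟩
  | inv_mem g hg =>
    rw [inv_eq_self_of_mem_generators hg]
    exact fun p hp hpq => ⟨phi_apply_mem_teichmuller hκ hg hp,
      reflTransGen_apply_of_mem_generators hg hp hq hpq⟩
  | one => exact fun p hp hpq => ⟨hp, hpq⟩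
  | mul g h _ _ ihg ihh =>
    intro p hp hpq
    obtain ⟨hhp, hhpq⟩ := ihh p hp hpq
    exact ihg (h p) hhp hhpq

theorem exists_mem_closure_of_reflTransGen {p q : ℝ × ℝ × ℝ}
    (h : ReflTransGen DescentStep p q) : ∃ g ∈ Subgroup.closure generators, g p = q := by
  induction h with
  | refl => exact ⟨1, one_mem _, rfl⟩
  | tail _ hbc ih =>
    obtain ⟨g, hg, rfl⟩ := ih
    obtain ⟨f, hf, rfl⟩ := hbc.exists_mem_generators
    exact ⟨f * g, mul_mem (Subgroup.subset_closure hf) hg, rfl⟩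

theorem exists_reflTransGen_isReduced {κ : ℝ} (hκ : κ < 2) {p : ℝ × ℝ × ℝ}
    (hp : p ∈ teichmuller κ) : ∃ q, ReflTransGen DescentStep p q ∧ IsReduced q := by
  have hS : 0 < coordSum p := by
    obtain ⟨hx, hy, hz, -⟩ := hp
    simp only [coordSum]
    linarith
  obtain ⟨q, hpq, hq⟩ := exists_reflTransGen_normal_of_decrease (r := DescentStep)
    (s := {a | a ∈ teichmuller κ ∧ coordSum a ≤ coordSum p}) coordSum (m := 6)
    (div_pos (by linarith) hS)
    (fun a ha b hab => ⟨hab.mem_teichmuller hκ ha.1, hab.coordSum_lt.le.trans ha.2⟩)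
    (fun a ha => by obtain ⟨hx, hy, hz, -⟩ := ha.1; simp only [coordSum]; linarith)
    (fun a ha b c hab hbc => hab.coordSum_add_le hκ ha.1 ha.2 hbc)
    p ⟨hp, le_rfl⟩
  exact ⟨q, hpq, isReduced_iff_forall_not_descentStep.2 hq⟩

end OneHoledTorus

open OneHoledTorus in
theorem stmt_17_general (κ : ℝ) (hκ₂ : κ < 2) (x y z : ℝ)
    (hx : 2 ≤ x) (hy : 2 ≤ y) (hz : 2 ≤ z)
    (h : x ^ 2 + y ^ 2 + z ^ 2 - x * y * z - 2 = κ) :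
    ∃! p : ℝ × ℝ × ℝ,
      (∃ g ∈ Subgroup.closure {phi1, phi2, phi3}, g (x, y, z) = p) ∧
      2 * p.1 ≤ p.2.1 * p.2.2 ∧ 2 * p.2.1 ≤ p.2.2 * p.1 ∧ 2 * p.2.2 ≤ p.1 * p.2.1 := by
  have hp : (x, y, z) ∈ teichmuller κ := ⟨hx, hy, hz, h⟩
  obtain ⟨q, hpq, hq⟩ := exists_reflTransGen_isReduced hκ₂ hp
  refine ⟨q, ⟨exists_mem_closure_of_reflTransGen hpq, hq⟩, ?_⟩
  rintro _ ⟨⟨g, hg, rfl⟩, hgp⟩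
  exact (reflTransGen_apply_of_mem_closure hκ₂ hq hg _ hp hpq).2.eq_of_forall_not
    (isReduced_iff_forall_not_descentStep.1 hgp)

/-- Fundamental domain for the mapping class group action on the Teichmüller component
of the one-holed torus character variety with boundary trace `κ ∈ (−2,2)`: for every point
`(x,y,z)` with `x,y,z ≥ 2` on the level set `x² + y² + z² − xyz − 2 = κ`, the orbit under
the group generated by `φ₁, φ₂, φ₃` contains exactly one point `(x′,y′,z′)` with
`2x′ ≤ y′z′`, `2y′ ≤ z′x′`, `2z′ ≤ x′y′` (i.e. with homogeneous coordinates in `(0,1/2]`). -/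
theorem stmt_17 (κ : ℝ) (hκ₁ : -2 < κ) (hκ₂ : κ < 2) (x y z : ℝ)
    (hx : 2 ≤ x) (hy : 2 ≤ y) (hz : 2 ≤ z)
    (h : x ^ 2 + y ^ 2 + z ^ 2 - x * y * z - 2 = κ) :
    ∃! p : ℝ × ℝ × ℝ,
      (∃ g ∈ Subgroup.closure {phi1, phi2, phi3}, g (x, y, z) = p) ∧
      2 * p.1 ≤ p.2.1 * p.2.2 ∧ 2 * p.2.1 ≤ p.2.2 * p.1 ∧ 2 * p.2.2 ≤ p.1 * p.2.1 :=
  stmt_17_general κ hκ₂ x y z hx hy hz h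
end

section
/- Let θ ∈ [0,2π) and set κ = −2·cos(θ/2). Then the iterated integral ∫₀^{1/2} ( ∫_{(1−2s)/(2−(κ+2)s)}^{1/2} 1/((1−r−s)·r·s) dr ) ds equals (1/2)·(π² − θ²/4). -/
/-!
Partial fractions evaluate the inner integral, leaving `J(c) = ∫₀^{1/2} (log (1 - c s(1-s)) -
2 log (1-2s)) / (s(1-s)) ds` at `c = κ + 2 = 4 sin² (θ/4)`. Differentiating under the integral sign
gives `J'(c) = -∫₀^{1/2} dt / (1 - c t(1-t))`, an arctangent integral equal to
`-φ / (2 sin φ cos φ)` when `c = 4 sin² φ`, so `φ ↦ J(4 sin² φ)` has derivative `-4φ`. As the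
integrand of `J(4)` vanishes identically, `J(4 sin² φ) = π²/2 - 2φ²`; take `φ = θ/4`.
-/

open Real MeasureTheory intervalIntegral Set Filter Topology
open scoped Interval

lemma ae_mem_Ioo_of_mem_uIoc {a b : ℝ} (hab : a ≤ b) : ∀ᵐ t : ℝ, t ∈ Ι a b → t ∈ Ioo a b := by
  filter_upwards [volume.ae_ne b] with t htb ht
  rw [uIoc_of_le hab] at ht
  exact ⟨ht.1, ht.2.lt_of_ne htb⟩

lemma integral_one_div_sub_mul {p a b : ℝ} (ha : 0 < a) (hab : a ≤ b) (hb : b < p) :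
    ∫ r in a..b, 1 / ((p - r) * r) = (log b - log (p - b) - (log a - log (p - a))) / p := by
  have hpos : ∀ r ∈ [[a, b]], 0 < r ∧ 0 < p - r := fun r hr => by
    rw [uIcc_of_le hab] at hr
    exact ⟨ha.trans_le hr.1, by linarith [hr.2]⟩
  have hderiv : ∀ r ∈ [[a, b]],
      HasDerivAt (fun r => (log r - log (p - r)) / p) (1 / ((p - r) * r)) r := by
    intro r hr
    obtain ⟨hr, hpr⟩ := hpos r hr
    have hp : p ≠ 0 := by linarith
    have hsub : HasDerivAt (fun r => p - r) (-1) r := by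
      simpa using (hasDerivAt_id r).const_sub p
    refine (((hasDerivAt_log hr.ne').sub (hsub.log hpr.ne')).div_const p).congr_deriv ?_
    field_simp
    ring
  have hint : IntervalIntegrable (fun r => 1 / ((p - r) * r)) volume a b :=
    (continuousOn_const.div (by fun_prop) fun r hr =>
      (mul_pos (hpos r hr).2 (hpos r hr).1).ne').intervalIntegrable
  rw [integral_eq_sub_of_hasDerivAt hderiv hint]
  ring

lemma le_one_sub_mul_mul_one_sub {b x t : ℝ} (hb : 0 ≤ b) (hx : x ≤ b) (ht : t ∈ Icc (0 : ℝ) 1) :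
    1 - b / 4 ≤ 1 - x * t * (1 - t) := by
  have hm : 0 ≤ t * (1 - t) := mul_nonneg ht.1 (by linarith [ht.2])
  nlinarith [mul_le_mul_of_nonneg_right hx hm, mul_nonneg hb (sq_nonneg (1 - 2 * t))]

lemma one_sub_mul_mul_one_sub_pos {c s : ℝ} (hc : c ≤ 4) (hs : s ∈ Ioo (0 : ℝ) (1 / 2)) :
    0 < 1 - c * s * (1 - s) := by
  obtain ⟨hs0, hs2⟩ := hs
  nlinarith [mul_le_mul_of_nonneg_right hc (by nlinarith : 0 ≤ s * (1 - s)),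
    pow_pos (by linarith : 0 < 1 - 2 * s) 2]

lemma continuous_inv_one_sub_mul_mul_one_sub {c : ℝ} (hc : c ∈ Ico (0 : ℝ) 4) :
    Continuous fun t : ℝ => (1 - c * t * (1 - t))⁻¹ :=
  Continuous.inv₀ (by fun_prop) fun t => (show 0 < 1 - c * t * (1 - t) by
    nlinarith [hc.1, hc.2, mul_nonneg hc.1 (sq_nonneg (1 - 2 * t))]).ne'

lemma four_mul_sin_sq_mem_Ico {φ : ℝ} (hφ : φ ∈ Ico 0 (π / 2)) : 4 * sin φ ^ 2 ∈ Ico (0 : ℝ) 4 := by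
  have hcos : 0 < cos φ := cos_pos_of_mem_Ioo ⟨by linarith [hφ.1, pi_pos], hφ.2⟩
  exact ⟨by positivity, by nlinarith [sin_sq_add_cos_sq φ]⟩

lemma integral_inv_one_sub_four_mul_sin_sq {φ : ℝ} (hφ : φ ∈ Ioo 0 (π / 2)) :
    ∫ t in (0 : ℝ)..(1 / 2), (1 - 4 * sin φ ^ 2 * t * (1 - t))⁻¹ = φ / (2 * sin φ * cos φ) := by
  have hsin : 0 < sin φ := sin_pos_of_pos_of_lt_pi hφ.1 (by linarith [hφ.2, pi_pos])
  have hcos : 0 < cos φ := cos_pos_of_mem_Ioo ⟨by linarith [hφ.1, pi_pos], hφ.2⟩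
  have hderiv : ∀ t ∈ [[(0 : ℝ), 1 / 2]],
      HasDerivAt (fun t => -arctan (tan φ * (1 - 2 * t)) / (2 * sin φ * cos φ))
        (1 - 4 * sin φ ^ 2 * t * (1 - t))⁻¹ t := by
    intro t _
    have hlin : HasDerivAt (fun t => tan φ * (1 - 2 * t)) (tan φ * (-2)) t := by
      simpa using ((hasDerivAt_id t).const_mul 2 |>.const_sub 1).const_mul (tan φ)
    refine ((hlin.arctan).neg.div_const _).congr_deriv ?_
    have hden : 1 - 4 * sin φ ^ 2 * t * (1 - t) = cos φ ^ 2 + sin φ ^ 2 * (1 - 2 * t) ^ 2 := by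
      linear_combination -sin_sq_add_cos_sq φ
    have : 0 < cos φ ^ 2 + sin φ ^ 2 * (1 - 2 * t) ^ 2 := by positivity
    rw [hden, tan_eq_sin_div_cos]
    field_simp
  have hc : 4 * sin φ ^ 2 ∈ Ico (0 : ℝ) 4 := four_mul_sin_sq_mem_Ico ⟨hφ.1.le, hφ.2⟩
  rw [integral_eq_sub_of_hasDerivAt hderiv
    ((continuous_inv_one_sub_mul_mul_one_sub hc).intervalIntegrable _ _)]
  norm_num [neg_div, arctan_tan (by linarith [hφ.1, pi_pos] : -(π / 2) < φ) hφ.2]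

lemma intervalIntegrable_one_sub_log_one_sub_two_mul :
    IntervalIntegrable (fun s : ℝ => 1 - log (1 - 2 * s)) volume 0 (1 / 2) := by
  have h := ((intervalIntegrable_log' (a := 0) (b := 1)).comp_sub_left 1).comp_mul_left (c := 2)
  norm_num at h
  exact intervalIntegrable_const.sub h.symm

noncomputable def outerIntegrand (c s : ℝ) : ℝ :=
  (log (1 - c * s * (1 - s)) - 2 * log (1 - 2 * s)) / (s * (1 - s))

noncomputable def outerIntegral (c : ℝ) : ℝ := ∫ s in (0 : ℝ)..(1 / 2), outerIntegrand c s

lemma measurable_outerIntegrand (c : ℝ) : Measurable (outerIntegrand c) := by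
  unfold outerIntegrand; fun_prop

lemma integral_inner_eq_outerIntegrand {c s : ℝ} (hc : c ≤ 4) (hs : s ∈ Ioo (0 : ℝ) (1 / 2)) :
    ∫ r in (1 - 2 * s) / (2 - c * s)..(1 / 2), 1 / ((1 - r - s) * r * s) = outerIntegrand c s := by
  have hN := one_sub_mul_mul_one_sub_pos hc hs
  obtain ⟨hs0, hs2⟩ := hs
  have h2s : 0 < 1 - 2 * s := by linarith
  have hd : 0 < 2 - c * s := by nlinarith
  have hab : (1 - 2 * s) / (2 - c * s) ≤ 1 / 2 := by rw [div_le_iff₀ hd]; nlinarith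
  have hsplit : ∀ r : ℝ, 1 / ((1 - r - s) * r * s) = 1 / ((1 - s - r) * r) / s := fun r => by
    rw [div_div, sub_right_comm]
  simp_rw [hsplit, intervalIntegral.integral_div]
  rw [integral_one_div_sub_mul (div_pos h2s hd) hab (by linarith),
    show 1 - s - 1 / 2 = (1 - 2 * s) / 2 by ring,
    show 1 - s - (1 - 2 * s) / (2 - c * s) = (1 - c * s * (1 - s)) / (2 - c * s) by
      rw [eq_div_iff hd.ne', sub_mul, div_mul_cancel₀ _ hd.ne']; ring,
    log_div h2s.ne' two_ne_zero, log_div h2s.ne' hd.ne', log_div hN.ne' hd.ne', one_div, log_inv,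
    outerIntegrand, div_div]
  field_simp
  ring

/-- Near `s = 0` the numerator is `O(s)`, so only the integrable singularity of `log (1 - 2s)`
at `s = 1/2` survives. -/
lemma abs_outerIntegrand_le {c s : ℝ} (hc : c ∈ Icc (0 : ℝ) 4) (hs : s ∈ Ioo (0 : ℝ) (1 / 2)) :
    |outerIntegrand c s| ≤ 12 * (1 - log (1 - 2 * s)) := by
  have hN := one_sub_mul_mul_one_sub_pos hc.2 hs
  obtain ⟨hs0, hs2⟩ := hs
  have h2s : 0 < 1 - 2 * s := by linarith
  have hm : 0 < s * (1 - s) := by nlinarith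
  have hlog_le : log (1 - c * s * (1 - s)) ≤ 0 :=
    log_nonpos hN.le (by nlinarith [mul_nonneg hc.1 hm.le])
  have hlog_ge : 2 * log (1 - 2 * s) ≤ log (1 - c * s * (1 - s)) := by
    have : log ((1 - 2 * s) ^ 2) ≤ log (1 - c * s * (1 - s)) :=
      log_le_log (pow_pos h2s 2) (by nlinarith [mul_le_mul_of_nonneg_right hc.2 hm.le])
    rwa [log_pow, Nat.cast_ofNat] at this
  have hy : -log (1 - 2 * s) * (1 - 2 * s) ≤ 2 * s := by
    nlinarith [mul_le_mul_of_nonneg_right (one_sub_inv_le_log_of_pos h2s) h2s.le,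
      inv_mul_cancel₀ h2s.ne']
  rw [outerIntegrand, abs_div, abs_of_pos hm, div_le_iff₀ hm,
    abs_of_nonneg (by linarith)]
  rcases le_or_gt s (1 / 4) with hs4 | hs4 <;> nlinarith

lemma intervalIntegrable_outerIntegrand {c : ℝ} (hc : c ∈ Icc (0 : ℝ) 4) :
    IntervalIntegrable (outerIntegrand c) volume 0 (1 / 2) := by
  refine (intervalIntegrable_one_sub_log_one_sub_two_mul.const_mul 12).mono_fun'
    (measurable_outerIntegrand c).aestronglyMeasurable ?_
  rw [EventuallyLE, ae_restrict_iff' measurableSet_uIoc]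
  filter_upwards [ae_mem_Ioo_of_mem_uIoc (by norm_num : (0 : ℝ) ≤ 1 / 2)] with s hs hs'
  exact (Real.norm_eq_abs _).trans_le (abs_outerIntegrand_le hc (hs hs'))

lemma hasDerivAt_outerIntegrand {c s : ℝ} (hs : s * (1 - s) ≠ 0)
    (hc : 1 - c * s * (1 - s) ≠ 0) :
    HasDerivAt (fun c => outerIntegrand c s) (-(1 - c * s * (1 - s))⁻¹) c := by
  have hlin : HasDerivAt (fun c => 1 - c * s * (1 - s)) (-(s * (1 - s))) c := by
    simpa [mul_assoc] using ((hasDerivAt_id c).mul_const (s * (1 - s))).const_sub 1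
  refine (((hlin.log hc).sub_const (2 * log (1 - 2 * s))).div_const (s * (1 - s))).congr_deriv ?_
  rw [div_right_comm, neg_div, div_self hs, neg_div, one_div]

lemma hasDerivAt_outerIntegral {c : ℝ} (hc : c ∈ Ico (0 : ℝ) 4) :
    HasDerivAt outerIntegral (-∫ t in (0 : ℝ)..(1 / 2), (1 - c * t * (1 - t))⁻¹) c := by
  have hδ : 0 < 1 - (c + 4) / 2 / 4 := by linarith [hc.2]
  have hball : Metric.ball c ((4 - c) / 2) ∈ 𝓝 c := Metric.ball_mem_nhds c (by linarith [hc.2])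
  have hlower : ∀ t ∈ Ι (0 : ℝ) (1 / 2), ∀ x ∈ Metric.ball c ((4 - c) / 2),
      1 - (c + 4) / 2 / 4 ≤ 1 - x * t * (1 - t) := by
    intro t ht x hx
    rw [uIoc_of_le (by norm_num)] at ht
    rw [Metric.mem_ball, Real.dist_eq, abs_lt] at hx
    refine le_one_sub_mul_mul_one_sub ?_ ?_ ⟨ht.1.le, ?_⟩ <;> linarith [hc.1, hx.2, ht.2]
  rw [← intervalIntegral.integral_neg]
  refine (hasDerivAt_integral_of_dominated_loc_of_deriv_le
    (F' := fun x t => -(1 - x * t * (1 - t))⁻¹) (bound := fun _ => (1 - (c + 4) / 2 / 4)⁻¹)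
    hball (.of_forall fun x => (measurable_outerIntegrand x).aestronglyMeasurable)
    (intervalIntegrable_outerIntegrand (Ico_subset_Icc_self hc))
    (continuous_inv_one_sub_mul_mul_one_sub hc).neg.aestronglyMeasurable ?_
    intervalIntegrable_const ?_).2
  · refine .of_forall fun t ht x hx => ?_
    have h := hlower t ht x hx
    rw [norm_neg, norm_inv, Real.norm_of_nonneg (hδ.le.trans h)]
    exact inv_anti₀ hδ h
  · refine .of_forall fun t ht x hx =>
      hasDerivAt_outerIntegrand ?_ (hδ.trans_le (hlower t ht x hx)).ne'
    rw [uIoc_of_le (by norm_num)] at ht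
    nlinarith [ht.1, ht.2]

lemma continuousOn_outerIntegral : ContinuousOn outerIntegral (Icc 0 4) := by
  intro c hc
  refine continuousWithinAt_of_dominated_interval
    (bound := fun s => 12 * (1 - log (1 - 2 * s)))
    (.of_forall fun x => (measurable_outerIntegrand x).aestronglyMeasurable)
    (eventually_nhdsWithin_of_forall fun x hx => ?_)
    (intervalIntegrable_one_sub_log_one_sub_two_mul.const_mul 12) ?_
  · filter_upwards [ae_mem_Ioo_of_mem_uIoc (by norm_num : (0 : ℝ) ≤ 1 / 2)] with s hs hs'
    exact (Real.norm_eq_abs _).trans_le (abs_outerIntegrand_le hx (hs hs'))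
  · filter_upwards [ae_mem_Ioo_of_mem_uIoc (by norm_num : (0 : ℝ) ≤ 1 / 2)] with s hs hs'
    have hlin : ContinuousAt (fun x => 1 - x * s * (1 - s)) c := by fun_prop
    exact ((hlin.log (one_sub_mul_mul_one_sub_pos hc.2 (hs hs')).ne').sub continuousAt_const
      |>.div_const _).continuousWithinAt

lemma outerIntegral_four : outerIntegral 4 = 0 := by
  refine (integral_congr_uIoo (μ := volume) (g := fun _ => 0) fun s _ => ?_).trans integral_zero
  rw [outerIntegrand, show 1 - 4 * s * (1 - s) = (1 - 2 * s) ^ 2 by ring, log_pow]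
  simp

lemma hasDerivAt_outerIntegral_four_mul_sin_sq {φ : ℝ} (hφ : φ ∈ Ico 0 (π / 2)) :
    HasDerivAt (fun φ => outerIntegral (4 * sin φ ^ 2)) (-4 * φ) φ := by
  have hsq : HasDerivAt (fun φ => 4 * sin φ ^ 2) (8 * sin φ * cos φ) φ := by
    refine (((hasDerivAt_sin φ).pow 2).const_mul 4).congr_deriv ?_
    push_cast
    ring
  refine ((hasDerivAt_outerIntegral (four_mul_sin_sq_mem_Ico hφ)).comp φ hsq).congr_deriv ?_
  rcases hφ.1.eq_or_lt with rfl | hφ0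
  · simp
  · rw [integral_inv_one_sub_four_mul_sin_sq ⟨hφ0, hφ.2⟩]
    have hsin : 0 < sin φ := sin_pos_of_pos_of_lt_pi hφ0 (by linarith [hφ.2, pi_pos])
    have hcos : 0 < cos φ := cos_pos_of_mem_Ioo ⟨by linarith [hφ.1, pi_pos], hφ.2⟩
    field_simp
    ring

lemma outerIntegral_four_mul_sin_sq {φ : ℝ} (hφ : φ ∈ Icc 0 (π / 2)) :
    outerIntegral (4 * sin φ ^ 2) = π ^ 2 / 2 - 2 * φ ^ 2 := by
  set f := fun φ => outerIntegral (4 * sin φ ^ 2) + 2 * φ ^ 2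
  have hcont : ContinuousOn f (Icc 0 (π / 2)) := by
    refine (continuousOn_outerIntegral.comp (by fun_prop) fun φ _ => ?_).add (by fun_prop)
    exact ⟨by positivity, by nlinarith [sin_sq_le_one φ]⟩
  have hderiv : ∀ φ ∈ Ico 0 (π / 2), HasDerivWithinAt f 0 (Ici φ) φ := fun φ hφ => by
    refine ((hasDerivAt_outerIntegral_four_mul_sin_sq hφ).add
      ((hasDerivAt_pow 2 φ).const_mul 2)).hasDerivWithinAt.congr_deriv ?_
    push_cast
    ring
  have hconst := constant_of_has_deriv_right_zero hcont hderiv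
  have hend : f (π / 2) = π ^ 2 / 2 := by
    simp only [f, sin_pi_div_two, one_pow, mul_one, outerIntegral_four]
    ring
  have := (hconst φ hφ).trans ((hconst _ (right_mem_Icc.2 (by positivity))).symm.trans hend)
  simp only [f] at this
  linarith

/-- Weil–Petersson volume integral for the one-holed torus with a cone point of angle
`θ ∈ [0,2π)`: with `κ = −2cos(θ/2)`, the integral of the Weil–Petersson form
`dr∧ds/((1−r−s)rs)` over the fundamental domain
`{(r,s) : s ∈ (0,1/2], r ∈ ((1−2s)/(2−(κ+2)s), 1/2]}` equals `(1/2)(π² − θ²/4)`. -/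
theorem stmt_18 (θ κ : ℝ) (h0 : 0 ≤ θ) (h2 : θ < 2 * π) (hκ : κ = -2 * cos (θ / 2)) :
    (∫ s in (0 : ℝ)..(1 / 2),
        ∫ r in ((1 - 2 * s) / (2 - (κ + 2) * s))..(1 / 2), 1 / ((1 - r - s) * r * s)) =
      (1 / 2) * (π ^ 2 - θ ^ 2 / 4) := by
  have hφ : θ / 4 ∈ Ico 0 (π / 2) := ⟨by linarith, by linarith⟩
  have hc : κ + 2 = 4 * sin (θ / 4) ^ 2 := by
    rw [hκ, show θ / 2 = 2 * (θ / 4) by ring, cos_two_mul_eq_one_sub]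
    ring
  have hc4 : κ + 2 ≤ 4 := hc ▸ (four_mul_sin_sq_mem_Ico hφ).2.le
  calc _ = outerIntegral (κ + 2) := integral_congr_uIoo fun s hs =>
          integral_inner_eq_outerIntegrand hc4 (by rwa [uIoo_of_le (by norm_num)] at hs)
    _ = _ := by
      rw [hc, outerIntegral_four_mul_sin_sq (Ico_subset_Icc_self hφ)]
      ring
end
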